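/- Let V be a finite set, let W₀ be an n×n real symmetric positive definite matrix, for each s ∈ V let W_s be an n×n real symmetric positive semidefinite matrix, and let C ∈ ℝ^{p×n} with p ≤ n and rank(C) = p. For S ⊆ V define W_S = W₀ + Σ_{s∈S} W_s. Then the set function g₁ : 2^V → ℝ defined by g₁(S) = log det(C W_S Cᵀ) is submodular and monotone increasing. -/

import Mathlib

/-!
Write `X = C W₀ Cᵀ` and `D_s = C W_s Cᵀ`. Full row rank of `C` makes `X` positive definite, so
`g₁(S) = log det (X + ∑_{s ∈ S} D_s)`. Adding `D = √D √D` to a positive definite `Y` multiplies the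
determinant by `det (1 + √D Y⁻¹ √D)`, by the matrix determinant lemma. As `Y` grows in the Loewner
order, `Y⁻¹` shrinks, hence so does `1 + √D Y⁻¹ √D`, and the determinant is monotone on positive
definite matrices: the marginal gain of `D` decreases, which is submodularity. Monotonicity is the
monotonicity of the determinant itself.
-/

open Matrix
open scoped MatrixOrder

namespace Matrix

variable {m V : Type*}

lemma add_sum_le_add_sum_of_subset {X : Matrix m m ℝ} {D : V → Matrix m m ℝ}
    (hD : ∀ s, (D s).PosSemidef) {A B : Finset V} (hAB : A ⊆ B) :
    X + ∑ s ∈ A, D s ≤ X + ∑ s ∈ B, D s :=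
  add_le_add_right (Finset.sum_le_sum_of_subset_of_nonneg hAB fun s _ _ => (hD s).nonneg) X

lemma PosDef.add_sum {X : Matrix m m ℝ} {D : V → Matrix m m ℝ} (hX : X.PosDef)
    (hD : ∀ s, (D s).PosSemidef) (S : Finset V) : (X + ∑ s ∈ S, D s).PosDef :=
  hX.add_posSemidef (posSemidef_sum S fun s _ => hD s)

theorem vecMul_injective_of_rank_eq_card {K n : Type*} [Field K] [Fintype m] [Fintype n]
    {C : Matrix m n K} (hC : C.rank = Fintype.card m) : Function.Injective C.vecMul :=
  vecMul_injective_iff.mpr <| linearIndependent_iff_card_eq_finrank_span.mpr <| by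
    rw [Set.finrank, ← rank_eq_finrank_span_row, hC]

variable [Fintype m]

lemma PosSemidef.isSelfAdjoint_mul_mul_same {P T : Matrix m m ℝ} (hP : P.PosSemidef)
    (hT : IsSelfAdjoint T) : (T * P * T).PosSemidef := by
  simpa only [← star_eq_conjTranspose, hT.star_eq] using hP.conjTranspose_mul_mul_same T

variable [DecidableEq m]

lemma PosSemidef.one_le_det_one_add {E : Matrix m m ℝ} (hE : E.PosSemidef) :
    1 ≤ (1 + E).det := by
  have hcfc : 1 + E = cfc (fun x : ℝ => 1 + x) E := by
    rw [cfc_const_add 1 (fun x => x) E, cfc_id' ℝ E, map_one]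
  rw [hcfc, hE.1.cfc_eq]
  simp only [IsHermitian.cfc, RCLike.ofReal_real_eq_id, CompTriple.comp_eq, det_map,
    det_diagonal, Function.comp_apply]
  exact Finset.one_le_prod fun i _ => by linarith [hE.eigenvalues_nonneg i]

lemma PosDef.det_add_eq {X D : Matrix m m ℝ} (hX : X.PosDef) (hD : D.PosSemidef) :
    (X + D).det = X.det * (1 + CFC.sqrt D * X⁻¹ * CFC.sqrt D).det := by
  conv_lhs => rw [← CFC.sqrt_mul_sqrt_self D hD.nonneg]
  exact det_add_mul _ _ hX.det_pos.ne'.isUnit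

lemma PosDef.det_le_det_of_le {X Y : Matrix m m ℝ} (hX : X.PosDef) (hXY : X ≤ Y) :
    X.det ≤ Y.det := by
  have hconj := hX.inv.posSemidef.isSelfAdjoint_mul_mul_same
    (CFC.sqrt_nonneg (Y - X)).isSelfAdjoint
  calc X.det = X.det * 1 := (mul_one _).symm
    _ ≤ X.det * (1 + CFC.sqrt (Y - X) * X⁻¹ * CFC.sqrt (Y - X)).det :=
      mul_le_mul_of_nonneg_left hconj.one_le_det_one_add hX.det_pos.le
    _ = Y.det := by rw [← hX.det_add_eq hXY, add_sub_cancel]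

lemma PosDef.inv_le_inv_of_le {X Y : Matrix m m ℝ} (hX : X.PosDef) (hXY : X ≤ Y) :
    Y⁻¹ ≤ X⁻¹ := by
  have hY : Y.PosDef := by simpa using hX.add_posSemidef hXY
  have hE : (Y - X).PosSemidef := hXY
  have hX' := hX.det_pos.ne'.isUnit
  have hY' := hY.det_pos.ne'.isUnit
  have hYX : Y⁻¹ * (Y - X) * X⁻¹ = X⁻¹ - Y⁻¹ := by
    rw [Matrix.mul_sub, Matrix.sub_mul, nonsing_inv_mul _ hY', Matrix.mul_assoc,
      mul_nonsing_inv _ hX', one_mul, mul_one]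
  have hXY' : X⁻¹ * (Y - X) * Y⁻¹ = X⁻¹ - Y⁻¹ := by
    rw [Matrix.mul_sub, Matrix.sub_mul, nonsing_inv_mul _ hX', Matrix.mul_assoc,
      mul_nonsing_inv _ hY', one_mul, mul_one]
  -- using `X⁻¹ - Y⁻¹ = Y⁻¹ (Y - X) X⁻¹` twice exhibits it as a sum of congruences
  have hsplit : X⁻¹ - Y⁻¹ =
      (Y⁻¹)ᴴ * (Y - X) * Y⁻¹ + ((Y - X) * Y⁻¹)ᴴ * X⁻¹ * ((Y - X) * Y⁻¹) := by
    rw [conjTranspose_mul, hY.inv.1.eq, hE.1.eq]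
    calc X⁻¹ - Y⁻¹ = Y⁻¹ * (Y - X) * (Y⁻¹ + (X⁻¹ - Y⁻¹)) := by rw [add_sub_cancel, hYX]
      _ = _ := by rw [← hXY']; simp only [Matrix.mul_add, Matrix.mul_assoc]
  rw [le_iff, hsplit]
  exact (hE.conjTranspose_mul_mul_same _).add (hX.inv.posSemidef.conjTranspose_mul_mul_same _)

lemma PosDef.log_det_add_sub_log_det_le_of_le {Y Z D : Matrix m m ℝ} (hY : Y.PosDef)
    (hYZ : Y ≤ Z) (hD : D.PosSemidef) :
    Real.log (Z + D).det - Real.log Z.det ≤ Real.log (Y + D).det - Real.log Y.det := by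
  set T := CFC.sqrt D
  have hT : IsSelfAdjoint T := (CFC.sqrt_nonneg D).isSelfAdjoint
  have hpos {W : Matrix m m ℝ} (hW : W.PosDef) : (1 + T * W⁻¹ * T).PosDef :=
    PosDef.one.add_posSemidef (hW.inv.posSemidef.isSelfAdjoint_mul_mul_same hT)
  have hgain {W : Matrix m m ℝ} (hW : W.PosDef) :
      Real.log (W + D).det - Real.log W.det = Real.log (1 + T * W⁻¹ * T).det := by
    rw [hW.det_add_eq hD, Real.log_mul hW.det_pos.ne' (hpos hW).det_pos.ne']
    ring
  have hZ : Z.PosDef := by simpa using hY.add_posSemidef hYZ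
  rw [hgain hY, hgain hZ]
  exact Real.log_le_log (hpos hZ).det_pos <| (hpos hZ).det_le_det_of_le <|
    add_le_add_right (hT.conjugate_le_conjugate (hY.inv_le_inv_of_le hYZ)) 1

variable {X : Matrix m m ℝ} {D : V → Matrix m m ℝ}

lemma PosDef.log_det_add_sum_mono (hX : X.PosDef) (hD : ∀ s, (D s).PosSemidef)
    {A B : Finset V} (hAB : A ⊆ B) :
    Real.log (X + ∑ s ∈ A, D s).det ≤ Real.log (X + ∑ s ∈ B, D s).det :=
  have hA := hX.add_sum hD A
  Real.log_le_log hA.det_pos (hA.det_le_det_of_le (add_sum_le_add_sum_of_subset hD hAB))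

lemma PosDef.log_det_add_sum_insert_sub_le [DecidableEq V] (hX : X.PosDef)
    (hD : ∀ s, (D s).PosSemidef) {A B : Finset V} (hAB : A ⊆ B) {s : V} (hs : s ∉ B) :
    Real.log (X + ∑ t ∈ insert s B, D t).det - Real.log (X + ∑ t ∈ B, D t).det ≤
      Real.log (X + ∑ t ∈ insert s A, D t).det - Real.log (X + ∑ t ∈ A, D t).det := by
  rw [Finset.sum_insert hs, Finset.sum_insert fun h => hs (hAB h), ← add_assoc,
    add_right_comm X (D s), ← add_assoc, add_right_comm X (D s)]
  exact (hX.add_sum hD A).log_det_add_sub_log_det_le_of_le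
    (add_sum_le_add_sum_of_subset hD hAB) (hD s)

end Matrix

theorem weighted_logdet_gramian_submodular_monotone_general
    {V : Type*} [DecidableEq V] {n p : ℕ}
    (C : Matrix (Fin p) (Fin n) ℝ) (hC : C.rank = p)
    (W₀ : Matrix (Fin n) (Fin n) ℝ) (hW₀ : W₀.PosDef)
    (W : V → Matrix (Fin n) (Fin n) ℝ) (hW : ∀ s : V, (W s).PosSemidef)
    (g₁ : Finset V → ℝ)
    (hg₁ : ∀ S : Finset V, g₁ S = Real.log (C * (W₀ + ∑ s ∈ S, W s) * Cᵀ).det) :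
    (∀ A B : Finset V, A ⊆ B → ∀ s : V, s ∉ B →
      g₁ (insert s A) - g₁ A ≥ g₁ (insert s B) - g₁ B) ∧
    (∀ A B : Finset V, A ⊆ B → g₁ A ≤ g₁ B) := by
  have hCt : Cᵀ = Cᴴ := (conjTranspose_eq_transpose_of_trivial C).symm
  have hX : (C * W₀ * Cᵀ).PosDef := hCt ▸
    hW₀.mul_mul_conjTranspose_same (vecMul_injective_of_rank_eq_card (by simpa using hC))
  have hD (s : V) : (C * W s * Cᵀ).PosSemidef := hCt ▸ (hW s).mul_mul_conjTranspose_same C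
  have hg (S : Finset V) : g₁ S = Real.log (C * W₀ * Cᵀ + ∑ s ∈ S, C * W s * Cᵀ).det := by
    rw [hg₁, Matrix.mul_add, Matrix.add_mul, Matrix.mul_sum, Matrix.sum_mul]
  simp only [hg]
  exact ⟨fun A B hAB s hs => hX.log_det_add_sum_insert_sub_le hD hAB hs,
    fun A B hAB => hX.log_det_add_sum_mono hD hAB⟩

/-- For a full-row-rank weight matrix `C ∈ ℝ^{p×n}` (`p ≤ n`, `rank C = p`), the weighted
log determinant `g₁(S) = log det(C W_S Cᵀ)` of the controllability Gramian
`W_S = W₀ + ∑_{s ∈ S} W_s` is a submodular and monotone increasing set function. -/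
theorem weighted_logdet_gramian_submodular_monotone
    {V : Type*} [Fintype V] [DecidableEq V] {n p : ℕ}
    (hpn : p ≤ n)
    (C : Matrix (Fin p) (Fin n) ℝ) (hC : C.rank = p)
    (W₀ : Matrix (Fin n) (Fin n) ℝ) (hW₀ : W₀.PosDef)
    (W : V → Matrix (Fin n) (Fin n) ℝ) (hW : ∀ s : V, (W s).PosSemidef)
    (g₁ : Finset V → ℝ)
    (hg₁ : ∀ S : Finset V, g₁ S = Real.log (C * (W₀ + ∑ s ∈ S, W s) * Cᵀ).det) :
    (∀ A B : Finset V, A ⊆ B → ∀ s : V, s ∉ B →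
      g₁ (insert s A) - g₁ A ≥ g₁ (insert s B) - g₁ B) ∧
    (∀ A B : Finset V, A ⊆ B → g₁ A ≤ g₁ B) :=
  weighted_logdet_gramian_submodular_monotone_general C hC W₀ hW₀ W hW g₁ hg₁
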